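/- arXiv:nlin/0510068 — 5 statements merged into one kernel-verified Lean document; each statement's English description precedes it below -/
import Mathlib

section
/- Let k be a commutative ring and g a Lie algebra over k that decomposes as an internal direct sum g = g₊ ⊕ g₋ of two Lie subalgebras, with associated linear projections P₊ : g → g₊ and P₋ : g → g₋. Then the k-bilinear operation [a,b]' := [P₊a, P₊b] − [P₋a, P₋b] is a second Lie bracket on the underlying module of g: it is alternating and satisfies the Jacobi identity. (When 2 is invertible in k, [a,b]' equals [Ra,b] + [a,Rb] for the classical R-matrix R = ½(P₊ − P₋).) -/
/-!
Since `gp` and `gm` are complementary, `Pp` kills `gm` and `Pm` kills `gp`. As `gp`, `gm` are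
subalgebras, the projections of `[b, c]' = [Pp b, Pp c] - [Pm b, Pm c]` are `[Pp b, Pp c]` and
`-[Pm b, Pm c]`, so `[a, [b, c]']' = [Pp a, [Pp b, Pp c]] + [Pm a, [Pm b, Pm c]]`. The cyclic sum
of this is the sum of the Jacobi sums of `gp` and of `gm`, which both vanish.
-/

section SplitBracket

variable {k L : Type*} [CommRing k] [LieRing L] [LieAlgebra k L]
  {gp gm : LieSubalgebra k L} {Pp Pm : L →ₗ[k] L}

def splitBracket (Pp Pm : L →ₗ[k] L) (a b : L) : L :=
  ⁅Pp a, Pp b⁆ - ⁅Pm a, Pm b⁆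

theorem splitBracket_self (a : L) : splitBracket Pp Pm a a = 0 := by
  rw [splitBracket, lie_self, lie_self, sub_zero]

theorem apply_eq_zero_of_mem_of_add_eq_self (hsum : ∀ x : L, Pp x + Pm x = x)
    (hfp : ∀ x ∈ gp, Pp x = x) {x : L} (hx : x ∈ gp) : Pm x = 0 := by
  have h := hsum x
  rwa [hfp x hx, add_eq_left] at h

variable (hPp : ∀ x : L, Pp x ∈ gp) (hPm : ∀ x : L, Pm x ∈ gm)
  (hsum : ∀ x : L, Pp x + Pm x = x)
  (hfp : ∀ x ∈ gp, Pp x = x) (hfm : ∀ x ∈ gm, Pm x = x)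

include hPp hPm hsum hfp hfm

theorem fst_apply_splitBracket (a b : L) : Pp (splitBracket Pp Pm a b) = ⁅Pp a, Pp b⁆ := by
  have hm : Pp ⁅Pm a, Pm b⁆ = 0 :=
    apply_eq_zero_of_mem_of_add_eq_self (fun x => (add_comm _ _).trans (hsum x)) hfm
      (gm.lie_mem (hPm a) (hPm b))
  rw [splitBracket, map_sub, hfp _ (gp.lie_mem (hPp a) (hPp b)), hm, sub_zero]

theorem snd_apply_splitBracket (a b : L) : Pm (splitBracket Pp Pm a b) = -⁅Pm a, Pm b⁆ := by
  have hp : Pm ⁅Pp a, Pp b⁆ = 0 :=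
    apply_eq_zero_of_mem_of_add_eq_self hsum hfp (gp.lie_mem (hPp a) (hPp b))
  rw [splitBracket, map_sub, hp, hfm _ (gm.lie_mem (hPm a) (hPm b)), zero_sub]

theorem splitBracket_splitBracket (a b c : L) :
    splitBracket Pp Pm a (splitBracket Pp Pm b c) =
      ⁅Pp a, ⁅Pp b, Pp c⁆⁆ + ⁅Pm a, ⁅Pm b, Pm c⁆⁆ := by
  rw [splitBracket, fst_apply_splitBracket hPp hPm hsum hfp hfm,
    snd_apply_splitBracket hPp hPm hsum hfp hfm, lie_neg, sub_neg_eq_add]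

theorem splitBracket_jacobi (a b c : L) :
    splitBracket Pp Pm a (splitBracket Pp Pm b c) + splitBracket Pp Pm b (splitBracket Pp Pm c a) +
      splitBracket Pp Pm c (splitBracket Pp Pm a b) = 0 := by
  simp only [splitBracket_splitBracket hPp hPm hsum hfp hfm]
  linear_combination (norm := abel)
    lie_jacobi (Pp a) (Pp b) (Pp c) + lie_jacobi (Pm a) (Pm b) (Pm c)

end SplitBracket

/-- Let `g` be a Lie algebra over a commutative ring `k` that decomposes as an internal
direct sum of two Lie subalgebras `gp ⊕ gm`, with associated linear projections
`Pp`, `Pm` (so `Pp x + Pm x = x`, `Pp x ∈ gp`, `Pm x ∈ gm`, and `Pp`, `Pm` restrict to the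
identity on `gp`, `gm` respectively).  Then the bilinear operation
`[a,b]' := [Pp a, Pp b] − [Pm a, Pm b]` is a second Lie bracket on the underlying module:
it is alternating and satisfies the Jacobi identity. -/
theorem second_lie_bracket_of_splitting {k L : Type*} [CommRing k] [LieRing L]
    [LieAlgebra k L] (gp gm : LieSubalgebra k L) (Pp Pm : L →ₗ[k] L)
    (hPp : ∀ x : L, Pp x ∈ gp) (hPm : ∀ x : L, Pm x ∈ gm)
    (hsum : ∀ x : L, Pp x + Pm x = x)
    (hfp : ∀ x ∈ gp, Pp x = x) (hfm : ∀ x ∈ gm, Pm x = x) :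
    (∀ a : L, ⁅Pp a, Pp a⁆ - ⁅Pm a, Pm a⁆ = (0 : L)) ∧
    (∀ a b c : L,
      (⁅Pp a, Pp (⁅Pp b, Pp c⁆ - ⁅Pm b, Pm c⁆)⁆ - ⁅Pm a, Pm (⁅Pp b, Pp c⁆ - ⁅Pm b, Pm c⁆)⁆) +
      (⁅Pp b, Pp (⁅Pp c, Pp a⁆ - ⁅Pm c, Pm a⁆)⁆ - ⁅Pm b, Pm (⁅Pp c, Pp a⁆ - ⁅Pm c, Pm a⁆)⁆) +
      (⁅Pp c, Pp (⁅Pp a, Pp b⁆ - ⁅Pm a, Pm b⁆)⁆ - ⁅Pm c, Pm (⁅Pp a, Pp b⁆ - ⁅Pm a, Pm b⁆)⁆)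
        = 0) :=
  ⟨splitBracket_self, splitBracket_jacobi hPp hPm hsum hfp hfm⟩
end

section
/- Let A be a commutative ring with a derivation d : A → A, and on A[T,T⁻¹] consider the bracket {f,g}_r := T^r·(∂_T f · D g − D f · ∂_T g). For s ∈ ℤ let 𝒜_{≥s} := {f ∈ A[T,T⁻¹] : the coefficient of Tⁱ in f vanishes for all i < s} and 𝒜_{<s} := {f : the coefficient of Tⁱ vanishes for all i ≥ s}, so that A[T,T⁻¹] = 𝒜_{≥s} ⊕ 𝒜_{<s} as A-modules. Then for every (k,r) with either (k,r) = (0,0), or k ∈ {1,2} and r ∈ ℤ arbitrary, or (k,r) = (3,2), both submodules 𝒜_{≥k−r} and 𝒜_{<k−r} are closed under {·,·}_r, i.e. they are Lie subalgebras of (A[T,T⁻¹], {·,·}_r). -/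
open LaurentPolynomial

variable {A : Type*} [CommRing A]

/-- Formal derivative `∂_T` on Laurent polynomials: `∂_T (a·Tⁿ) = n·a·Tⁿ⁻¹`. -/
noncomputable def tder (f : A[T;T⁻¹]) : A[T;T⁻¹] :=
  Finsupp.sum f.coeff fun n a => C (n • a) * T (n - 1)

/-- Coefficientwise extension `D` of a derivation `d : A → A`: `D (a·Tⁿ) = d(a)·Tⁿ`. -/
noncomputable def cder (d : A → A) (f : A[T;T⁻¹]) : A[T;T⁻¹] :=
  Finsupp.sum f.coeff fun n a => C (d a) * T n

lemma T_mul_apply (r : ℤ) (f : A[T;T⁻¹]) (i : ℤ) : (T r * f : A[T;T⁻¹]).coeff i = f.coeff (i - r) := by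
  have : (T r : A[T;T⁻¹]) = AddMonoidAlgebra.single r 1 := rfl
  rw [this, AddMonoidAlgebra.coeff_single_mul_apply, one_mul, neg_add_eq_sub]

lemma tder_apply (f : A[T;T⁻¹]) (m : ℤ) : (tder f).coeff m = (m + 1) • f.coeff (m + 1) := by
  unfold tder
  simp_rw [← single_eq_C_mul_T]
  rw [AddMonoidAlgebra.coeff_finsuppSum, Finsupp.sum_apply]
  simp_rw [AddMonoidAlgebra.coeff_single]
  rw [Finsupp.sum]
  simp_rw [Finsupp.single_apply, sub_eq_iff_eq_add]
  by_cases h : m + 1 ∈ f.coeff.support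
  · rw [Finset.sum_eq_single (m+1)]
    · simp
    · intro b _ hb; simp [hb]
    · intro h'; exact absurd h h'
  · rw [Finset.sum_eq_zero]
    · simp [Finsupp.notMem_support_iff.mp h]
    · intro b hb
      have : b ≠ m + 1 := fun e => h (e ▸ hb)
      simp [this]

lemma cder_apply {d : A → A} (hd0 : d 0 = 0) (f : A[T;T⁻¹]) (m : ℤ) :
    (cder d f).coeff m = d (f.coeff m) := by
  unfold cder
  simp_rw [← single_eq_C_mul_T]
  rw [AddMonoidAlgebra.coeff_finsuppSum, Finsupp.sum_apply]
  simp_rw [AddMonoidAlgebra.coeff_single]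
  rw [Finsupp.sum]
  simp_rw [Finsupp.single_apply]
  by_cases h : m ∈ f.coeff.support
  · rw [Finset.sum_eq_single m]
    · simp
    · intro b _ hb; simp [hb]
    · intro h'; exact absurd h h'
  · rw [Finset.sum_eq_zero]
    · rw [Finsupp.notMem_support_iff.mp h, hd0]
    · intro b hb
      have : b ≠ m := fun e => h (e ▸ hb)
      simp [this]

lemma mul_supp_ge {s t : ℤ} {f g : A[T;T⁻¹]} (hf : ∀ i < s, f.coeff i = 0)
    (hg : ∀ i < t, g.coeff i = 0) : ∀ i < s + t, (f * g).coeff i = 0 := by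
  intro i hi
  rw [AddMonoidAlgebra.coeff_mul, Finsupp.sum]
  apply Finset.sum_eq_zero; intro a _
  rw [Finsupp.sum]
  apply Finset.sum_eq_zero; intro b _
  split_ifs with h
  · by_cases ha : a < s
    · rw [hf a ha, zero_mul]
    · rw [hg b (by omega), mul_zero]
  · rfl

lemma mul_supp_lt {s t : ℤ} {f g : A[T;T⁻¹]} (hf : ∀ i, s ≤ i → f.coeff i = 0)
    (hg : ∀ i, t ≤ i → g.coeff i = 0) : ∀ i, s + t - 1 ≤ i → (f * g).coeff i = 0 := by
  intro i hi
  rw [AddMonoidAlgebra.coeff_mul, Finsupp.sum]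
  apply Finset.sum_eq_zero; intro a _
  rw [Finsupp.sum]
  apply Finset.sum_eq_zero; intro b _
  split_ifs with h
  · by_cases ha : s ≤ a
    · rw [hf a ha, zero_mul]
    · rw [hg b (by omega), mul_zero]
  · rfl


/-- The bracket `{f,g}_r := T^r·(∂_T f · D g − D f · ∂_T g)`. -/
noncomputable def lbr (d : A → A) (r : ℤ) (f g : A[T;T⁻¹]) : A[T;T⁻¹] :=
  T r * (tder f * cder d g - cder d f * tder g)

lemma lbr_ge {d : A → A} (hd0 : d 0 = 0) {s r : ℤ}
    (h : 1 ≤ s + r ∨ (s = 0 ∧ r = 0)) (f g : A[T;T⁻¹])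
    (hf : ∀ i < s, f.coeff i = 0) (hg : ∀ i < s, g.coeff i = 0) :
    ∀ i < s, (lbr d r f g).coeff i = 0 := by
  intro i hi
  rw [lbr, T_mul_apply, AddMonoidAlgebra.coeff_sub, Finsupp.sub_apply]
  set s₁ : ℤ := if 1 ≤ s + r then s - 1 else s with hs₁
  have htd : ∀ p : A[T;T⁻¹], (∀ j < s, p.coeff j = 0) → ∀ m < s₁, (tder p).coeff m = 0 := by
    intro p hp m hm
    rw [tder_apply]
    rcases lt_or_eq_of_le (show m + 1 ≤ s by omega) with h' | h'
    · rw [hp _ h', smul_zero]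
    · have hm1 : m + 1 = 0 := by omega
      rw [hm1, zero_smul]
  have hcd : ∀ p : A[T;T⁻¹], (∀ j < s, p.coeff j = 0) → ∀ m < s, (cder d p).coeff m = 0 := by
    intro p hp m hm
    rw [cder_apply hd0, hp m hm, hd0]
  have h1 := mul_supp_ge (htd f hf) (hcd g hg) (i - r) (by omega)
  have h2 := mul_supp_ge (hcd f hf) (htd g hg) (i - r) (by rw [add_comm]; omega)
  rw [h1, h2, sub_zero]

lemma lbr_lt {d : A → A} (hd0 : d 0 = 0) {s r : ℤ}
    (h : s + r ≤ 2 ∨ (s = 1 ∧ r = 2)) (f g : A[T;T⁻¹])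
    (hf : ∀ i, s ≤ i → f.coeff i = 0) (hg : ∀ i, s ≤ i → g.coeff i = 0) :
    ∀ i, s ≤ i → (lbr d r f g).coeff i = 0 := by
  intro i hi
  rw [lbr, T_mul_apply, AddMonoidAlgebra.coeff_sub, Finsupp.sub_apply]
  set s₁ : ℤ := if s + r ≤ 2 then s - 1 else s - 2 with hs₁
  have htd : ∀ p : A[T;T⁻¹], (∀ j, s ≤ j → p.coeff j = 0) → ∀ m, s₁ ≤ m → (tder p).coeff m = 0 := by
    intro p hp m hm
    rw [tder_apply]
    rcases lt_or_ge (m + 1) s with h' | h'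
    · have hm1 : m + 1 = 0 := by
        rcases h with h | h
        · simp only [hs₁, if_pos h] at hm; omega
        · simp only [hs₁] at hm; omega
      rw [hm1, zero_smul]
    · rw [hp _ h', smul_zero]
  have hcd : ∀ p : A[T;T⁻¹], (∀ j, s ≤ j → p.coeff j = 0) → ∀ m, s ≤ m → (cder d p).coeff m = 0 := by
    intro p hp m hm
    rw [cder_apply hd0, hp m hm, hd0]
  have hb : s₁ + s - 1 ≤ i - r := by
    rcases h with h | h
    · simp only [hs₁, if_pos h]; omega
    · simp only [hs₁]; omega
  have h1 := mul_supp_lt (htd f hf) (hcd g hg) (i - r) hb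
  have h2 := mul_supp_lt (hcd f hf) (htd g hg) (i - r) (by omega)
  rw [h1, h2, sub_zero]


/-- For `(k,r) = (0,0)`, or `k ∈ {1,2}` with `r ∈ ℤ` arbitrary, or `(k,r) = (3,2)`, both
submodules `𝒜_{≥k−r}` (Laurent polynomials supported in degrees `≥ k−r`) and `𝒜_{<k−r}`
(supported in degrees `< k−r`) are closed under `{·,·}_r`, i.e. they are Lie subalgebras
of `(A[T,T⁻¹], {·,·}_r)`. -/
theorem subalgebras_of_splitting (d : A → A)
    (hd_add : ∀ a b : A, d (a + b) = d a + d b)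
    (hd_mul : ∀ a b : A, d (a * b) = a * d b + d a * b)
    (k r : ℤ) (hkr : (k = 0 ∧ r = 0) ∨ (k = 1 ∨ k = 2) ∨ (k = 3 ∧ r = 2)) :
    (∀ f g : A[T;T⁻¹], (∀ i : ℤ, i < k - r → f.coeff i = 0) → (∀ i : ℤ, i < k - r → g.coeff i = 0) →
      ∀ i : ℤ, i < k - r → (lbr d r f g).coeff i = 0) ∧
    (∀ f g : A[T;T⁻¹], (∀ i : ℤ, k - r ≤ i → f.coeff i = 0) → (∀ i : ℤ, k - r ≤ i → g.coeff i = 0) →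
      ∀ i : ℤ, k - r ≤ i → (lbr d r f g).coeff i = 0) := by
  have hd0 : d 0 = 0 := by
    have h := hd_add 0 0
    rw [add_zero, left_eq_add] at h
    exact h
  constructor
  · intro f g hf hg i hi
    exact lbr_ge hd0 (by omega) f g hf hg i hi
  · intro f g hf hg i hi
    exact lbr_lt hd0 (by omega) f g hf hg i hi
end

section
/- Let A be a commutative ring with a derivation d : A → A, and let ι be the A-algebra automorphism of A[T,T⁻¹] determined by ι(T) = T⁻¹. Then for all f,g ∈ A[T,T⁻¹] and all r ∈ ℤ, ι({f,g}_r) = −{ι(f), ι(g)}_{2−r}, where {f,g}_r := T^r·(∂_T f · D g − D f · ∂_T g). Moreover, for all k,r ∈ ℤ, ι maps the submodule 𝒜_{≥k−r} of elements supported in degrees ≥ k−r bijectively onto the submodule 𝒜_{<k'−r'} of elements supported in degrees < k'−r', where k' = 3−k and r' = 2−r. -/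
open LaurentPolynomial

variable {A : Type*} [CommRing A]

/-- The `A`-algebra automorphism `ι` of `A[T,T⁻¹]` determined by `ι(T) = T⁻¹`:
`ι(a·Tⁿ) = a·T⁻ⁿ`. -/
noncomputable def linv (f : A[T;T⁻¹]) : A[T;T⁻¹] :=
  Finsupp.sum f.coeff fun n a => C a * T (-n)

lemma linv_eq_mapDomain (f : A[T;T⁻¹]) : linv f = AddMonoidAlgebra.ofCoeff (Finsupp.mapDomain Neg.neg f.coeff) := by
  rw [linv, Finsupp.mapDomain, AddMonoidAlgebra.ofCoeff_finsuppSum]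
  exact Finsupp.sum_congr fun n _ => (single_eq_C_mul_T _ _).symm

lemma linv_apply (f : A[T;T⁻¹]) (i : ℤ) : (linv f).coeff i = f.coeff (-i) := by
  rw [linv_eq_mapDomain, AddMonoidAlgebra.coeff_ofCoeff]
  have h : i = Neg.neg (-i) := by ring
  rw [h, Finsupp.mapDomain_apply neg_injective]
  simp

lemma linv_linv (f : A[T;T⁻¹]) : linv (linv f) = f := by
  ext i
  rw [linv_apply, linv_apply, neg_neg]

lemma linv_add (f g : A[T;T⁻¹]) : linv (f + g) = linv f + linv g := by
  rw [linv_eq_mapDomain, linv_eq_mapDomain, linv_eq_mapDomain, AddMonoidAlgebra.coeff_add,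
    Finsupp.mapDomain_add, AddMonoidAlgebra.ofCoeff_add]

lemma linv_single (a : A) (n : ℤ) : linv (C a * T n) = C a * T (-n) := by
  rw [← single_eq_C_mul_T, linv, AddMonoidAlgebra.coeff_single, Finsupp.sum_single_index]
  simp

lemma tder_single (a : A) (n : ℤ) : tder (C a * T n) = C (n • a) * T (n - 1) := by
  rw [← single_eq_C_mul_T, tder, AddMonoidAlgebra.coeff_single, Finsupp.sum_single_index]
  simp

lemma tder_add (f g : A[T;T⁻¹]) : tder (f + g) = tder f + tder g := by
  rw [tder, tder, tder, AddMonoidAlgebra.coeff_add]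
  refine Finsupp.sum_add_index' (fun n => by simp) (fun n a b => ?_)
  rw [smul_add, map_add, add_mul]

lemma cder_single (d : A → A) (hd_add : ∀ a b : A, d (a + b) = d a + d b)
    (a : A) (n : ℤ) : cder d (C a * T n) = C (d a) * T n := by
  have hd0 : d 0 = 0 := by
    have h := hd_add 0 0
    rw [add_zero] at h
    exact (right_eq_add.mp h)
  rw [← single_eq_C_mul_T, cder, AddMonoidAlgebra.coeff_single, Finsupp.sum_single_index]
  rw [hd0]; simp

lemma cder_add (d : A → A) (hd_add : ∀ a b : A, d (a + b) = d a + d b)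
    (f g : A[T;T⁻¹]) : cder d (f + g) = cder d f + cder d g := by
  rw [cder, cder, cder, AddMonoidAlgebra.coeff_add]
  have hd0 : d 0 = 0 := by
    have h := hd_add 0 0
    rw [add_zero] at h
    exact (right_eq_add.mp h)
  refine Finsupp.sum_add_index' (fun n => by simp [hd0]) (fun n a b => ?_)
  rw [hd_add, map_add, add_mul]

lemma lbr_add_left (d : A → A) (hd_add : ∀ a b : A, d (a + b) = d a + d b)
    (r : ℤ) (f₁ f₂ g : A[T;T⁻¹]) :
    lbr d r (f₁ + f₂) g = lbr d r f₁ g + lbr d r f₂ g := by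
  simp only [lbr, tder_add, cder_add d hd_add]
  ring

lemma lbr_add_right (d : A → A) (hd_add : ∀ a b : A, d (a + b) = d a + d b)
    (r : ℤ) (f g₁ g₂ : A[T;T⁻¹]) :
    lbr d r f (g₁ + g₂) = lbr d r f g₁ + lbr d r f g₂ := by
  simp only [lbr, tder_add, cder_add d hd_add]
  ring

lemma mono_mul (x y : A) (i j : ℤ) :
    (C x * T i) * (C y * T j) = C (x * y) * T (i + j) := by
  rw [map_mul, T_add]
  ring

lemma T_mul_mono (u : A) (r s : ℤ) : (T r * (C u * T s) : A[T;T⁻¹]) = C u * T (r + s) := by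
  rw [T_add]; ring

lemma lbr_mono (d : A → A) (hd_add : ∀ a b : A, d (a + b) = d a + d b)
    (r m n : ℤ) (a b : A) :
    lbr d r (C a * T m) (C b * T n)
      = C (m • a * d b - d a * (n • b)) * T (r + m + n - 1) := by
  rw [lbr, tder_single, tder_single, cder_single d hd_add, cder_single d hd_add,
    mono_mul, mono_mul]
  rw [mul_sub, T_mul_mono, T_mul_mono,
    show r + (m - 1 + n) = r + m + n - 1 by ring,
    show r + (m + (n - 1)) = r + m + n - 1 by ring,
    ← sub_mul, ← map_sub]

/-- Under `ι(T) = T⁻¹` one has `ι({f,g}_r) = −{ι(f), ι(g)}_{2−r}`, and `ι` maps the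
submodule of elements supported in degrees `≥ k−r` bijectively onto the submodule of
elements supported in degrees `< k'−r'`, where `k' = 3−k`, `r' = 2−r`. -/
theorem inversion_of_bracket (d : A → A)
    (hd_add : ∀ a b : A, d (a + b) = d a + d b)
    (hd_mul : ∀ a b : A, d (a * b) = a * d b + d a * b) :
    (∀ (r : ℤ) (f g : A[T;T⁻¹]),
      linv (lbr d r f g) = - lbr d (2 - r) (linv f) (linv g)) ∧
    (∀ k r : ℤ,
      Set.BijOn linv {f : A[T;T⁻¹] | ∀ i : ℤ, i < k - r → f.coeff i = 0}
        {f : A[T;T⁻¹] | ∀ i : ℤ, (3 - k) - (2 - r) ≤ i → f.coeff i = 0}) := by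
  constructor
  · intro r f g
    induction f using LaurentPolynomial.induction_on' generalizing g with
    | add p q hp hq =>
      rw [lbr_add_left d hd_add, linv_add, hp, hq, linv_add,
        lbr_add_left d hd_add, neg_add]
    | C_mul_T m a =>
      induction g using LaurentPolynomial.induction_on' with
      | add p q hp hq =>
        rw [lbr_add_right d hd_add, linv_add, hp, hq, linv_add,
          lbr_add_right d hd_add, neg_add]
      | C_mul_T n b =>
        rw [lbr_mono d hd_add, linv_single, linv_single, linv_single,
          lbr_mono d hd_add,
          show 2 - r + -m + -n - 1 = -(r + m + n - 1) by ring,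
          show (-m) • a * d b - d a * ((-n) • b)
            = -(m • a * d b - d a * (n • b)) by rw [neg_zsmul, neg_zsmul]; ring,
          map_neg, neg_mul, neg_neg]
  · intro k r
    have h1 : Set.MapsTo linv {f : A[T;T⁻¹] | ∀ i : ℤ, i < k - r → f.coeff i = 0}
        {f : A[T;T⁻¹] | ∀ i : ℤ, (3 - k) - (2 - r) ≤ i → f.coeff i = 0} := by
      intro f hf i hi
      rw [linv_apply]
      exact hf _ (by omega)
    have h2 : Set.MapsTo linv {f : A[T;T⁻¹] | ∀ i : ℤ, (3 - k) - (2 - r) ≤ i → f.coeff i = 0}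
        {f : A[T;T⁻¹] | ∀ i : ℤ, i < k - r → f.coeff i = 0} := by
      intro f hf i hi
      rw [linv_apply]
      exact hf _ (by omega)
    exact Set.InvOn.bijOn ⟨fun x _ => linv_linv x, fun x _ => linv_linv x⟩ h1 h2
end

section
/- Let A be a commutative ring with a derivation d : A → A. Consider formal series X = Σ_{i ≤ M} x_i·Tⁱ with coefficients in A whose support is bounded above (formal Laurent series in T⁻¹, i.e. expansions at ∞), and extend the canonical bracket {f,g}_0 := ∂_T f · D g − D f · ∂_T g (∂_T the formal T-derivative, D the coefficientwise extension of d) to such series against Laurent polynomials. Let L ∈ A[T] be a polynomial of degree ≤ N, and suppose {X, L}_0 = 0. Then {P_{≥0} X, L}_0 is a polynomial in A[T] of degree at most N − 2, where P_{≥0}X denotes the (polynomial) part of X supported in degrees ≥ 0. -/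
open LaurentPolynomial

variable {A : Type*} [CommRing A]

/-- The coefficient at degree `j` of the canonical bracket `{X, L}_0 = ∂_T X·D L − D X·∂_T L`
of a formal series `X = Σᵢ x_i·Tⁱ` (given by its coefficient function `x : ℤ → A`) with a
Laurent polynomial `L`; `d : A → A` is the derivation on coefficients. -/
noncomputable def sbr (d : A → A) (x : ℤ → A) (L : A[T;T⁻¹]) : ℤ → A := fun j =>
  (Finsupp.sum L.coeff fun i a => ((j - i + 1) • x (j - i + 1)) * d a) -
  (Finsupp.sum L.coeff fun i a => d (x (j - i + 1)) * (i • a))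

/-- Let `X = Σ_{i ≤ M} x_i·Tⁱ` be a formal series whose support is bounded above (a
Laurent expansion at `∞`), and let `L` be a polynomial of degree `≤ N` (supported in
degrees `0 ≤ i ≤ N`).  If `{X, L}_0 = 0`, then `{P_{≥0} X, L}_0` is a polynomial of
degree at most `N − 2`, where `P_{≥0} X` is the part of `X` supported in degrees `≥ 0`. -/
theorem truncated_bracket_polynomial (d : A → A)
    (hd_add : ∀ a b : A, d (a + b) = d a + d b)
    (hd_mul : ∀ a b : A, d (a * b) = a * d b + d a * b)
    (x : ℤ → A) (M : ℤ) (hM : ∀ i : ℤ, M < i → x i = 0)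
    (N : ℤ) (L : A[T;T⁻¹]) (hL : ∀ i : ℤ, i < 0 ∨ N < i → L.coeff i = 0)
    (hXL : ∀ j : ℤ, sbr d x L j = 0) :
    ∀ j : ℤ, j < 0 ∨ N - 2 < j → sbr d (fun i => if 0 ≤ i then x i else 0) L j = 0 := by
  have hd0 : d 0 = 0 := by
    have h := hd_add 0 0
    simp only [add_zero] at h
    exact (left_eq_add.mp h)
  intro j hj
  have hsupp : ∀ i ∈ L.coeff.support, 0 ≤ i ∧ i ≤ N := by
    intro i hi
    have hiL : L.coeff i ≠ 0 := Finsupp.mem_support_iff.mp hi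
    constructor
    · by_contra h; exact hiL (hL i (Or.inl (by omega)))
    · by_contra h; exact hiL (hL i (Or.inr (by omega)))
  rcases hj with hj | hj
  · unfold sbr
    rw [sub_eq_zero]
    have h1 : (Finsupp.sum L.coeff fun i a =>
        ((j - i + 1) • (if 0 ≤ j - i + 1 then x (j - i + 1) else 0)) * d a) = 0 := by
      rw [Finsupp.sum]
      apply Finset.sum_eq_zero
      intro i hi
      obtain ⟨h0i, _⟩ := hsupp i hi
      by_cases hk : 0 ≤ j - i + 1
      · have hk0 : j - i + 1 = 0 := by omega
        simp [hk0]
      · simp [hk]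
    have h2 : (Finsupp.sum L.coeff fun i a =>
        d (if 0 ≤ j - i + 1 then x (j - i + 1) else 0) * (i • a)) = 0 := by
      rw [Finsupp.sum]
      apply Finset.sum_eq_zero
      intro i hi
      obtain ⟨h0i, _⟩ := hsupp i hi
      by_cases hk : 0 ≤ j - i + 1
      · have hi0 : i = 0 := by omega
        simp [hi0]
      · simp [hk, hd0]
    simp only [h1, h2]
  · have heq : sbr d (fun i => if 0 ≤ i then x i else 0) L j = sbr d x L j := by
      unfold sbr
      congr 1
      · apply Finsupp.sum_congr
        intro i hi
        obtain ⟨_, hiN⟩ := hsupp i hi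
        have hk : (0:ℤ) ≤ j - i + 1 := by omega
        simp [hk]
      · apply Finsupp.sum_congr
        intro i hi
        obtain ⟨_, hiN⟩ := hsupp i hi
        have hk : (0:ℤ) ≤ j - i + 1 := by omega
        simp [hk]
    rw [heq, hXL]
end

section
/- Let A be a commutative ring with a derivation d : A → A, and for v ∈ A let σ_v be the A-algebra endomorphism of the polynomial ring A[T] determined by σ_v(T) = T + v. Then σ_v intertwines the canonical bracket: for all f, g ∈ A[T], {σ_v f, σ_v g}_0 = σ_v({f,g}_0), where {f,g}_0 := ∂_T f · D g − D f · ∂_T g, with ∂_T the formal T-derivative and D the derivation of A[T] extending d with D(T) = 0. -/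
/-!
Since `d` is a derivation, `D` satisfies the chain rule `D (f ∘ p) = (D f) ∘ p + f' ∘ p · D p`
for every substitution `T ↦ p`; the cross terms cancel in the bracket, leaving
`{f ∘ p, g ∘ p}_0 = p' · {f, g}_0 ∘ p`. For `p = T + v` the factor `p'` is `1`.
-/

open Polynomial

variable {A : Type*} [CommRing A]

/-- The derivation `D` of `A[T]` extending `d : A → A` coefficientwise, with `D(T) = 0`. -/
noncomputable def cderP (d : A → A) (f : A[X]) : A[X] :=
  f.sum fun n a => C (d a) * X ^ n

/-- The canonical bracket `{f,g}_0 := ∂_T f · D g − D f · ∂_T g` on `A[T]`. -/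
noncomputable def pbr (d : A → A) (f g : A[X]) : A[X] :=
  derivative f * cderP d g - cderP d f * derivative g

section

variable (D : Derivation ℤ A A)

theorem cderP_monomial (n : ℕ) (a : A) : cderP D (monomial n a) = C (D a) * X ^ n := by
  simp [cderP, sum_monomial_index]

theorem cderP_C (a : A) : cderP D (C a) = C (D a) := by
  simpa using cderP_monomial D 0 a

theorem cderP_X : cderP D (X : A[X]) = 0 := by
  rw [← monomial_one_one_eq_X, cderP_monomial, D.map_one_eq_zero, C_0, zero_mul]

theorem cderP_add (f g : A[X]) : cderP D (f + g) = cderP D f + cderP D g :=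
  sum_add_index _ _ _ (fun _ => by simp) (fun _ _ _ => by simp [add_mul])

theorem cderP_mul (f g : A[X]) : cderP D (f * g) = f * cderP D g + cderP D f * g := by
  induction f using Polynomial.induction_on' with
  | add p q hp hq => rw [add_mul, cderP_add, hp, hq, cderP_add]; ring
  | monomial m a =>
    induction g using Polynomial.induction_on' with
    | add p q hp hq => rw [mul_add, cderP_add, hp, hq, cderP_add]; ring
    | monomial n b =>
      rw [monomial_mul_monomial, cderP_monomial, cderP_monomial, cderP_monomial, D.leibniz,
        smul_eq_mul, smul_eq_mul, ← C_mul_X_pow_eq_monomial, ← C_mul_X_pow_eq_monomial, C_add,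
        C_mul, C_mul, pow_add]
      ring

theorem cderP_comp (f p : A[X]) :
    cderP D (f.comp p) = (cderP D f).comp p + (derivative f).comp p * cderP D p := by
  induction f using Polynomial.induction_on with
  | C a => simp [cderP_C]
  | add f g hf hg => simp only [add_comp, cderP_add, hf, hg, derivative_add]; ring
  | monomial n a ih =>
    have hX : cderP D (C a * X ^ n * X) = cderP D (C a * X ^ n) * X := by
      rw [cderP_mul, cderP_X, mul_zero, zero_add]
    rw [pow_succ, ← mul_assoc, mul_comp, X_comp, cderP_mul, ih, hX,
      derivative_mul (f := C a * X ^ n), derivative_X]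
    simp only [add_comp, mul_comp, X_comp, one_comp]
    ring

theorem pbr_comp (f g p : A[X]) :
    pbr D (f.comp p) (g.comp p) = derivative p * (pbr D f g).comp p := by
  simp only [pbr, cderP_comp, derivative_comp, sub_comp, mul_comp]
  ring

end

/-- The `A`-algebra endomorphism `σ_v` of `A[T]` determined by `σ_v(T) = T + v`
intertwines the canonical bracket: `{σ_v f, σ_v g}_0 = σ_v({f,g}_0)`. -/
theorem shift_preserves_bracket (d : A → A)
    (hd_add : ∀ a b : A, d (a + b) = d a + d b)
    (hd_mul : ∀ a b : A, d (a * b) = a * d b + d a * b)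
    (v : A) (f g : A[X]) :
    pbr d (aeval (X + C v) f) (aeval (X + C v) g) = aeval (X + C v) (pbr d f g) := by
  let D : Derivation ℤ A A :=
    Derivation.mk' (AddMonoidHom.mk' d hd_add).toIntLinearMap fun a b => by
      simp [hd_mul, mul_comm]
  have h := pbr_comp D f g (X + C v)
  rwa [derivative_X_add_C, one_mul, comp_eq_aeval, comp_eq_aeval, comp_eq_aeval] at h
end
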